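/- arXiv:2301.02776 — 2 statements merged into one kernel-verified Lean document; each statement's English description precedes it below -/
import Mathlib

section
/- With the lattice operators on functionals, for every polynomial f and functional u the identity f · (D_x u) = D_x((S_x f) u) − S_x((D_x f) u) holds. -/
/-- Left multiplication of a functional `u` by a polynomial `f`: `⟨fu, p⟩ = ⟨u, fp⟩`. -/
noncomputable def polyMul (f : Polynomial ℂ) (u : Polynomial ℂ →ₗ[ℂ] ℂ) :
    Polynomial ℂ →ₗ[ℂ] ℂ :=
  u.comp (LinearMap.mulLeft ℂ f)

/-- The operator `D_x` on functionals: `⟨D_x u, f⟩ = −⟨u, D_x f⟩`. -/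
noncomputable def funD (Dx : Polynomial ℂ →ₗ[ℂ] Polynomial ℂ)
    (u : Polynomial ℂ →ₗ[ℂ] ℂ) : Polynomial ℂ →ₗ[ℂ] ℂ :=
  -(u.comp Dx)

/-- The operator `S_x` on functionals: `⟨S_x u, f⟩ = ⟨u, S_x f⟩`. -/
noncomputable def funS (Sx : Polynomial ℂ →ₗ[ℂ] Polynomial ℂ)
    (u : Polynomial ℂ →ₗ[ℂ] ℂ) : Polynomial ℂ →ₗ[ℂ] ℂ :=
  u.comp Sx

/-- For every polynomial `f` and functional `u`,
`f · (D_x u) = D_x((S_x f) u) − S_x((D_x f) u)`. -/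
theorem polyMul_funD (Dx Sx : Polynomial ℂ →ₗ[ℂ] Polynomial ℂ)
    (α : ℂ) (hα : α ≠ 0) (U₁ U₂ : Polynomial ℂ)
    (hDfg : ∀ f g : Polynomial ℂ, Dx (f * g) = Dx f * Sx g + Sx f * Dx g)
    (hSfg : ∀ f g : Polynomial ℂ, Sx (f * g) = U₂ * (Dx f * Dx g) + Sx f * Sx g)
    (hfDg : ∀ f g : Polynomial ℂ,
      f * Dx g = Dx ((Sx f - α⁻¹ • (U₁ * Dx f)) * g) - α⁻¹ • Sx (g * Dx f)) :
    ∀ (f : Polynomial ℂ) (u : Polynomial ℂ →ₗ[ℂ] ℂ),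
      polyMul f (funD Dx u) =
        funD Dx (polyMul (Sx f) u) - funS Sx (polyMul (Dx f) u) := by
  intro f u
  ext p
  simp only [polyMul, funD, funS, LinearMap.sub_apply, LinearMap.neg_apply,
    LinearMap.comp_apply, LinearMap.mulLeft_apply, hDfg, map_add]
  ring
end

section
/- Let u and v be linear functionals on polynomials connected by a rational modification, i.e. π₂ u = π₁ v for nonzero polynomials π₁, π₂, and suppose u is semiclassical: φ D_x u = ψ S_x u for nonzero polynomials φ, ψ. Then there exist polynomials Φ and Ψ, not both zero, such that Φ D_x v + Ψ S_x v = 0; in particular, if Φ and Ψ are nonzero and v is regular, v is semiclassical. -/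
/-- A polynomial on which every linear functional vanishes is zero. -/
private lemma poly_eq_of_forall_lin {p q : Polynomial ℂ}
    (h : ∀ w : Polynomial ℂ →ₗ[ℂ] ℂ, w p = w q) : p = q := by
  apply Polynomial.ext
  intro n
  simpa [Polynomial.lcoeff_apply] using h (Polynomial.lcoeff ℂ n)

/-- If `u` and `v` are connected by a rational modification `π₂ u = π₁ v` and `u` is
semiclassical (`φ D_x u = ψ S_x u`), then there exist polynomials `Φ`, `Ψ`, not both zero,
with `Φ D_x v + Ψ S_x v = 0`; in particular if `Φ` and `Ψ` are nonzero and `v` is regular,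
then `v` is semiclassical. -/
theorem semiclassical_of_rational_modification
    (Dx Sx : Polynomial ℂ →ₗ[ℂ] Polynomial ℂ)
    (α : ℂ) (hα : α ≠ 0) (U₁ U₂ : Polynomial ℂ)
    (hDmul : ∀ (f : Polynomial ℂ) (w : Polynomial ℂ →ₗ[ℂ] ℂ),
      funD Dx (polyMul f w) =
        polyMul (Sx f - α⁻¹ • (U₁ * Dx f)) (funD Dx w) + α⁻¹ • polyMul (Dx f) (funS Sx w))
    (hSmul : ∀ (f : Polynomial ℂ) (w : Polynomial ℂ →ₗ[ℂ] ℂ),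
      funS Sx (polyMul f w) =
        polyMul ((α • U₂ - α⁻¹ • U₁ ^ 2) * Dx f) (funD Dx w) +
          polyMul (Sx f + α⁻¹ • (U₁ * Dx f)) (funS Sx w))
    (u v : Polynomial ℂ →ₗ[ℂ] ℂ)
    (π₁ π₂ : Polynomial ℂ) (hπ₁ : π₁ ≠ 0) (hπ₂ : π₂ ≠ 0)
    (hmod : polyMul π₂ u = polyMul π₁ v)
    (φ ψ : Polynomial ℂ) (hφ : φ ≠ 0) (hψ : ψ ≠ 0)
    (hsc : polyMul φ (funD Dx u) = polyMul ψ (funS Sx u)) :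
    ∃ Φ Ψ : Polynomial ℂ, ¬(Φ = 0 ∧ Ψ = 0) ∧
      polyMul Φ (funD Dx v) + polyMul Ψ (funS Sx v) = 0 := by
  classical
  -- pointwise versions of the hypotheses
  have hm : ∀ r, u (π₂ * r) = v (π₁ * r) := by
    intro r
    have h := LinearMap.congr_fun hmod r
    simpa [polyMul] using h
  have hs : ∀ r, -(u (Dx (φ * r))) = u (Sx (ψ * r)) := by
    intro r
    have h := LinearMap.congr_fun hsc r
    simpa [polyMul, funD, funS] using h
  -- pointwise (polynomial-level) product rules
  have PD : ∀ f p : Polynomial ℂ, f * Dx p =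
      Dx ((Sx f - Polynomial.C α⁻¹ * (U₁ * Dx f)) * p) - Sx (Polynomial.C α⁻¹ * Dx f * p) := by
    intro f p
    apply poly_eq_of_forall_lin
    intro w
    have h := LinearMap.congr_fun (hDmul f w) p
    simp only [funD, funS, polyMul, LinearMap.comp_apply, LinearMap.mulLeft_apply,
      LinearMap.neg_apply, LinearMap.add_apply, LinearMap.smul_apply, smul_eq_mul,
      Polynomial.smul_eq_C_mul] at h
    rw [map_sub w]
    rw [show Polynomial.C α⁻¹ * Dx f * p = α⁻¹ • (Dx f * p) by
      rw [Polynomial.smul_eq_C_mul, mul_assoc]]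
    rw [map_smul Sx, map_smul w, smul_eq_mul]
    linear_combination -h
  have PS : ∀ f p : Polynomial ℂ, f * Sx p =
      Sx ((Sx f + Polynomial.C α⁻¹ * (U₁ * Dx f)) * p) -
        Dx ((Polynomial.C α * U₂ - Polynomial.C α⁻¹ * U₁ ^ 2) * Dx f * p) := by
    intro f p
    apply poly_eq_of_forall_lin
    intro w
    have h := LinearMap.congr_fun (hSmul f w) p
    simp only [funD, funS, polyMul, LinearMap.comp_apply, LinearMap.mulLeft_apply,
      LinearMap.neg_apply, LinearMap.add_apply, LinearMap.smul_apply, smul_eq_mul,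
      Polynomial.smul_eq_C_mul] at h
    rw [map_sub w]
    linear_combination h
  -- abbreviations
  set n11 : Polynomial ℂ := Sx π₁ - Polynomial.C α⁻¹ * (U₁ * Dx π₁) with hn11
  set b2 : Polynomial ℂ := Polynomial.C α⁻¹ * Dx π₁ with hb2def
  set n22 : Polynomial ℂ := Sx π₁ + Polynomial.C α⁻¹ * (U₁ * Dx π₁) with hn22
  set c1 : Polynomial ℂ := (Polynomial.C α * U₂ - Polynomial.C α⁻¹ * U₁ ^ 2) * Dx π₁ with hc1
  set A1 : Polynomial ℂ := Sx π₂ - Polynomial.C α⁻¹ * (U₁ * Dx π₂) with hA1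
  set a2 : Polynomial ℂ := Polynomial.C α⁻¹ * Dx π₂ with ha2
  set C2 : Polynomial ℂ := Sx π₂ + Polynomial.C α⁻¹ * (U₁ * Dx π₂) with hC2
  set C1 : Polynomial ℂ := (Polynomial.C α * U₂ - Polynomial.C α⁻¹ * U₁ ^ 2) * Dx π₂ with hC1
  have P1 : ∀ p, π₁ * Dx p = Dx (n11 * p) - Sx (b2 * p) := by
    intro p; rw [hn11, hb2def]; exact PD π₁ p
  have P2 : ∀ p, π₁ * Sx p = Sx (n22 * p) - Dx (c1 * p) := by
    intro p; rw [hn22, hc1]; exact PS π₁ p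
  have Q1 : ∀ p, π₂ * Dx p = Dx (A1 * p) - Sx (a2 * p) := by
    intro p; rw [hA1, ha2]; exact PD π₂ p
  have Q2 : ∀ p, π₂ * Sx p = Sx (C2 * p) - Dx (C1 * p) := by
    intro p; rw [hC2, hC1]; exact PS π₂ p
  by_cases hΔ : n11 * n22 - b2 * c1 = 0
  · -- degenerate case: the pair (Dx, Sx) satisfies an operator relation
    have R1 : ∀ q, Dx (c1 * q) + Sx (n11 * q) = 0 := by
      intro q
      have h1 := P1 (c1 * q)
      have h2 := P2 (n11 * q)
      have key : π₁ * (Dx (c1 * q) + Sx (n11 * q)) = Sx ((n11 * n22 - b2 * c1) * q) := by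
        rw [mul_add, h1, h2, show n11 * (c1 * q) = c1 * (n11 * q) by ring,
          show (n11 * n22 - b2 * c1) * q = n22 * (n11 * q) - b2 * (c1 * q) by ring, map_sub]
        ring
      rw [hΔ, zero_mul, map_zero] at key
      exact (mul_eq_zero.mp key).resolve_left hπ₁
    have R2 : ∀ q, Dx (n22 * q) + Sx (b2 * q) = 0 := by
      intro q
      have h1 := P1 (n22 * q)
      have h2 := P2 (b2 * q)
      have key : π₁ * (Dx (n22 * q) + Sx (b2 * q)) = Dx ((n11 * n22 - b2 * c1) * q) := by
        rw [mul_add, h1, h2, show n22 * (b2 * q) = b2 * (n22 * q) by ring,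
          show (n11 * n22 - b2 * c1) * q = n11 * (n22 * q) - c1 * (b2 * q) by ring, map_sub]
        ring
      rw [hΔ, zero_mul, map_zero] at key
      exact (mul_eq_zero.mp key).resolve_left hπ₁
    by_cases h11 : n11 = 0
    · by_cases hb2 : b2 = 0
      · -- then Dx = 0
        have hDx0 : ∀ p, Dx p = 0 := by
          intro p
          have h := P1 p
          simp only [h11, hb2, zero_mul, map_zero, sub_zero] at h
          exact (mul_eq_zero.mp h).resolve_left hπ₁
        refine ⟨1, 0, by simp, ?_⟩
        apply LinearMap.ext
        intro p
        simp [polyMul, funD, funS, hDx0]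
      · refine ⟨n22, -b2, fun hc => hb2 (neg_eq_zero.mp hc.2), ?_⟩
        apply LinearMap.ext
        intro p
        have h := congrArg v (R2 p)
        simp only [map_add, map_zero] at h
        simp only [polyMul, funD, funS, LinearMap.add_apply, LinearMap.comp_apply,
          LinearMap.mulLeft_apply, LinearMap.neg_apply, LinearMap.zero_apply, neg_mul,
          map_neg]
        linear_combination -h
    · refine ⟨c1, -n11, fun hc => h11 (neg_eq_zero.mp hc.2), ?_⟩
      apply LinearMap.ext
      intro p
      have h := congrArg v (R1 p)
      simp only [map_add, map_zero] at h
      simp only [polyMul, funD, funS, LinearMap.add_apply, LinearMap.comp_apply,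
        LinearMap.mulLeft_apply, LinearMap.neg_apply, LinearMap.zero_apply, neg_mul,
        map_neg]
      linear_combination -h
  · -- nondegenerate case: functional elimination
    set K1 : Polynomial ℂ := ψ * A1 + φ * a2 with hK1
    set K2 : Polynomial ℂ := ψ * C1 + φ * C2 with hK2
    have E1 : ∀ q, u (Sx (K1 * q)) =
        -(v (Dx (φ * n11 * q))) + v (Sx (φ * b2 * q)) := by
      intro q
      have hq := congrArg u (Q1 (φ * q))
      have hp := congrArg v (P1 (φ * q))
      have hmq := hm (Dx (φ * q))
      have hsq := hs (A1 * q)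
      simp only [map_sub] at hq hp
      rw [show A1 * (φ * q) = φ * (A1 * q) by ring] at hq
      rw [show n11 * (φ * q) = φ * n11 * q by ring,
        show b2 * (φ * q) = φ * b2 * q by ring] at hp
      rw [show K1 * q = ψ * (A1 * q) + a2 * (φ * q) by rw [hK1]; ring, map_add, map_add]
      linear_combination -hsq + hq - hmq - hp
    have E2 : ∀ q, u (Sx (K2 * q)) =
        -(v (Dx (φ * c1 * q))) + v (Sx (φ * n22 * q)) := by
      intro q
      have hq := congrArg u (Q2 (φ * q))
      have hp := congrArg v (P2 (φ * q))
      have hmq := hm (Sx (φ * q))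
      have hsq := hs (C1 * q)
      simp only [map_sub] at hq hp
      rw [show C1 * (φ * q) = φ * (C1 * q) by ring] at hq
      rw [show n22 * (φ * q) = φ * n22 * q by ring,
        show c1 * (φ * q) = φ * c1 * q by ring] at hp
      rw [show K2 * q = ψ * (C1 * q) + C2 * (φ * q) by rw [hK2]; ring, map_add, map_add]
      linear_combination -hsq - hq + hmq + hp
    by_cases hz : φ * (K2 * n11 - K1 * c1) = 0 ∧ φ * (K2 * b2 - K1 * n22) = 0
    · -- both eliminated coefficients vanish; use the determinant instead
      obtain ⟨hz1, hz2⟩ := hz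
      have hk1 : K2 * n11 = K1 * c1 := by
        have h := (mul_eq_zero.mp hz1).resolve_left hφ
        linear_combination h
      have hk2 : K2 * b2 = K1 * n22 := by
        have h := (mul_eq_zero.mp hz2).resolve_left hφ
        linear_combination h
      refine ⟨φ * (n11 * n22 - b2 * c1), 0,
        fun hc => hΔ ((mul_eq_zero.mp hc.1).resolve_left hφ), ?_⟩
      apply LinearMap.ext
      intro p
      have h1 := E1 (n22 * p)
      have h2 := E2 (b2 * p)
      rw [show K1 * (n22 * p) = K2 * (b2 * p) by linear_combination (-p) * hk2] at h1
      have h3 := h1.symm.trans h2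
      rw [show φ * b2 * (n22 * p) = φ * n22 * (b2 * p) by ring] at h3
      simp only [polyMul, funD, funS, LinearMap.add_apply, LinearMap.comp_apply,
        LinearMap.mulLeft_apply, LinearMap.neg_apply, zero_mul, map_zero, LinearMap.zero_apply]
      rw [show φ * (n11 * n22 - b2 * c1) * p = φ * n11 * (n22 * p) - φ * c1 * (b2 * p) by ring,
        map_sub Dx, map_sub v]
      linear_combination h3
    · refine ⟨φ * (K2 * n11 - K1 * c1), φ * (K2 * b2 - K1 * n22), hz, ?_⟩
      apply LinearMap.ext
      intro p
      have h1 := E1 (K2 * p)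
      have h2 := E2 (K1 * p)
      rw [show K1 * (K2 * p) = K2 * (K1 * p) by ring] at h1
      have h3 := h1.symm.trans h2
      simp only [polyMul, funD, funS, LinearMap.add_apply, LinearMap.comp_apply,
        LinearMap.mulLeft_apply, LinearMap.neg_apply, LinearMap.zero_apply]
      rw [show φ * (K2 * n11 - K1 * c1) * p = φ * n11 * (K2 * p) - φ * c1 * (K1 * p) by ring,
        show φ * (K2 * b2 - K1 * n22) * p = φ * b2 * (K2 * p) - φ * n22 * (K1 * p) by ring,
        map_sub Dx, map_sub Sx, map_sub v, map_sub v]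
      linear_combination h3
end
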